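/- The function u(t,x) = √c · sech(k + √c·(x - c·t)) solves the modified KdV equation u_t + 6u²u_x + u_xxx = 0 with initial condition u(0,x) = √c·sech(k + √c·x). -/

import Mathlib

/-!
The profile `w = sech` satisfies `w'' = w - 2 w³`, hence `w''' = (1 - 6 w²) w'`. For a travelling
wave `u = a w(k + a (x - c t))` the chain rule turns `u_t + 6 u² u_x + u_xxx` into
`a² (a² - c) w'`, which vanishes for `a = √c`.
-/

open Real

noncomputable def sech (x : ℝ) : ℝ := 1 / cosh x

lemma contDiff_sech {n : WithTop ℕ∞} : ContDiff ℝ n sech :=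
  contDiff_const.div contDiff_cosh fun x => (cosh_pos x).ne'

lemma hasDerivAt_sech (x : ℝ) : HasDerivAt sech (-sinh x / cosh x ^ 2) x :=
  ((hasDerivAt_const x 1).fun_div (hasDerivAt_cosh x) (cosh_pos x).ne').congr_deriv (by ring)

lemma deriv_sech : deriv sech = fun x => -sinh x / cosh x ^ 2 :=
  funext fun x => (hasDerivAt_sech x).deriv

lemma iteratedDeriv_two_sech : iteratedDeriv 2 sech = fun x => sech x - 2 * sech x ^ 3 := by
  rw [iteratedDeriv_succ, iteratedDeriv_one, deriv_sech]
  funext x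
  have hC := (cosh_pos x).ne'
  have hD : HasDerivAt (fun x => -sinh x / cosh x ^ 2)
      ((-cosh x * cosh x ^ 2 - -sinh x * (2 * cosh x * sinh x)) / (cosh x ^ 2) ^ 2) x :=
    ((hasDerivAt_sinh x).fun_neg.fun_div ((hasDerivAt_cosh x).fun_pow 2)
      (pow_ne_zero 2 hC)).congr_deriv (by push_cast; ring)
  rw [hD.deriv, sech]
  field_simp
  linear_combination 2 * sinh_sq x

lemma iteratedDeriv_three_sech (x : ℝ) :
    iteratedDeriv 3 sech x = (1 - 6 * sech x ^ 2) * deriv sech x := by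
  have hD : HasDerivAt (fun x => sech x - 2 * sech x ^ 3)
      (deriv sech x - 2 * (3 * sech x ^ 2 * deriv sech x)) x := by
    have h := ((contDiff_sech (n := 1)).differentiable one_ne_zero x).hasDerivAt
    exact (h.fun_sub ((h.fun_pow 3).const_mul 2)).congr_deriv (by push_cast; ring)
  rw [iteratedDeriv_succ, iteratedDeriv_two_sech, hD.deriv]
  ring

lemma iteratedDeriv_comp_affine {n : ℕ} {f : ℝ → ℝ} (hf : ContDiff ℝ n f) (a b x : ℝ) :
    iteratedDeriv n (fun y => f (a * y + b)) x = a ^ n * iteratedDeriv n f (a * x + b) := by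
  have hshift : ContDiff ℝ n fun z => f (z + b) := hf.comp (contDiff_id.add contDiff_const)
  rw [iteratedDeriv_comp_const_mul hshift, iteratedDeriv_comp_add_const]

section TravelingWave

variable {n : ℕ} {f : ℝ → ℝ} (hf : ContDiff ℝ n f) (A a k c t x : ℝ)
include hf

lemma iteratedDeriv_travelingWave_space :
    iteratedDeriv n (fun y => A * f (k + a * (y - c * t))) x =
      A * a ^ n * iteratedDeriv n f (k + a * (x - c * t)) := by
  have hwave : (fun y => A * f (k + a * (y - c * t))) = fun y => A * f (a * y + (k - a * c * t)) := by
    funext y; ring_nf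
  rw [hwave, iteratedDeriv_const_mul_field, iteratedDeriv_comp_affine hf]
  ring_nf

lemma iteratedDeriv_travelingWave_time :
    iteratedDeriv n (fun s => A * f (k + a * (x - c * s))) t =
      A * (-(a * c)) ^ n * iteratedDeriv n f (k + a * (x - c * t)) := by
  have hwave : (fun s => A * f (k + a * (x - c * s))) =
      fun s => A * f (-(a * c) * s + (k + a * x)) := by
    funext s; ring_nf
  rw [hwave, iteratedDeriv_const_mul_field, iteratedDeriv_comp_affine hf]
  ring_nf

end TravelingWave

theorem stmt_14 (c k : ℝ) (hc : 0 ≤ c)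
    (u : ℝ → ℝ → ℝ)
    (hu : ∀ t x, u t x = Real.sqrt c * (1 / Real.cosh (k + Real.sqrt c * (x - c * t)))) :
    (∀ t x : ℝ,
      deriv (fun s => u s x) t + 6 * (u t x) ^ 2 * deriv (fun y => u t y) x +
        iteratedDeriv 3 (fun y => u t y) x = 0) ∧
    (∀ x : ℝ, u 0 x = Real.sqrt c * (1 / Real.cosh (k + Real.sqrt c * x))) := by
  obtain rfl : u = fun t x => √c * sech (k + √c * (x - c * t)) := funext₂ hu
  refine ⟨fun t x => ?_, fun x => by simp only [sech, mul_zero, sub_zero]⟩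
  rw [← iteratedDeriv_one, ← iteratedDeriv_one,
    iteratedDeriv_travelingWave_time contDiff_sech, iteratedDeriv_travelingWave_space contDiff_sech,
    iteratedDeriv_travelingWave_space contDiff_sech, iteratedDeriv_three_sech, iteratedDeriv_one]
  linear_combination (√c ^ 2 * deriv sech (k + √c * (x - c * t))) * sq_sqrt hc
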